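/- arXiv:1311.7671 — 3 statements merged into one kernel-verified Lean document; each statement's English description precedes it below -/
import Mathlib

section
/- Let E be a complex Banach space, φ : E' → ℂ a nonconstant holomorphic (entire) function, and γ₀ ∈ E'. Suppose {U_k} is a countable basis of open sets of E'. Then for each k there exists a complex line L_k through γ₀ meeting U_k on which φ is nonconstant; in particular there is a sequence of complex lines through γ₀, each on which φ is nonconstant, whose union is dense in E'. -/
lemma stmt_5_key (E : Type*) [NormedAddCommGroup E] [NormedSpace ℂ E] [CompleteSpace E]
    (φ : (E →L[ℂ] ℂ) → ℂ) (hφ : Differentiable ℂ φ)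
    (hnc : ∃ γ₁ γ₂, φ γ₁ ≠ φ γ₂) (γ₀ : E →L[ℂ] ℂ)
    (V : Set (E →L[ℂ] ℂ)) (hV : IsOpen V) (hVne : V.Nonempty) :
    ∃ δ : E →L[ℂ] ℂ, δ ≠ 0 ∧ (∃ w : ℂ, γ₀ + w • δ ∈ V) ∧
      ¬ (∀ w₁ w₂ : ℂ, φ (γ₀ + w₁ • δ) = φ (γ₀ + w₂ • δ)) := by
  -- helper equalities (avoid instance-path mismatch in rewriting)
  have e0 : ∀ x : E →L[ℂ] ℂ, (0 : ℂ) • x = 0 := fun x => zero_smul ℂ x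
  have e1 : ∀ x : E →L[ℂ] ℂ, (1 : ℂ) • x = x := fun x => one_smul ℂ x
  have hpt : ∀ a x : E →L[ℂ] ℂ, a + (1 : ℂ) • (x - a) = x := by
    intro a x; rw [e1]; abel
  have hpt0 : ∀ a x : E →L[ℂ] ℂ, a + (0 : ℂ) • x = a := by
    intro a x; rw [e0, add_zero]
  have hn : ∀ (c : ℂ) (x : E →L[ℂ] ℂ), ‖c • x‖ = ‖c‖ * ‖x‖ := fun c x => norm_smul c x
  by_contra h
  push_neg at h
  obtain ⟨γ₁, γ₂, h12⟩ := hnc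
  have hγ : ∃ γ, φ γ ≠ φ γ₀ := by
    by_cases h1 : φ γ₁ = φ γ₀
    · exact ⟨γ₂, fun e => h12 (h1.trans e.symm)⟩
    · exact ⟨γ₁, h1⟩
  obtain ⟨γ, hγ⟩ := hγ
  -- φ is constant equal to φ γ₀ on V
  have hconst : ∀ u ∈ V, φ u = φ γ₀ := by
    intro u hu
    by_cases huγ : u = γ₀
    · have hδ : γ - γ₀ ≠ 0 := sub_ne_zero.2 (fun e => hγ (by rw [e]))
      have := h (γ - γ₀) hδ ⟨0, by rw [hpt0]; exact huγ ▸ hu⟩ 1 0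
      rw [hpt, hpt0] at this
      exact absurd this hγ
    · have hδ : u - γ₀ ≠ 0 := sub_ne_zero.2 huγ
      have := h (u - γ₀) hδ ⟨1, by rw [hpt]; exact hu⟩ 1 0
      rw [hpt, hpt0] at this
      exact this
  obtain ⟨u₀, hu₀⟩ := hVne
  obtain ⟨ε, hε, hball⟩ := Metric.isOpen_iff.1 hV u₀ hu₀
  have hu₀γ : γ ≠ u₀ := fun e => hγ (e ▸ hconst u₀ hu₀)
  have hd0 : γ - u₀ ≠ 0 := sub_ne_zero.2 hu₀γ
  set g : ℂ → ℂ := fun w => φ (u₀ + w • (γ - u₀)) with hg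
  have hgdiff : Differentiable ℂ g :=
    hφ.comp ((differentiable_const _).add (differentiable_id.smul_const _))
  have hganalytic : AnalyticOnNhd ℂ g Set.univ := fun z _ => hgdiff.analyticAt z
  have hcanalytic : AnalyticOnNhd ℂ (fun _ : ℂ => φ γ₀) Set.univ :=
    fun z _ => analyticAt_const
  have hev : g =ᶠ[nhds (0 : ℂ)] fun _ => φ γ₀ := by
    have hpos : 0 < ε / ‖γ - u₀‖ := div_pos hε (norm_pos_iff.2 hd0)
    filter_upwards [Metric.ball_mem_nhds 0 hpos] with w hw
    apply hconst
    apply hball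
    simp only [Metric.mem_ball, dist_eq_norm] at hw ⊢
    have hlt : ‖w • (γ - u₀)‖ < ε := by
      rw [hn]
      calc ‖w‖ * ‖γ - u₀‖ < (ε / ‖γ - u₀‖) * ‖γ - u₀‖ := by
            apply mul_lt_mul_of_pos_right _ (norm_pos_iff.2 hd0)
            simpa using hw
        _ = ε := div_mul_cancel₀ _ (norm_ne_zero_iff.2 hd0)
    have : u₀ + w • (γ - u₀) - u₀ = w • (γ - u₀) := by abel
    rw [this]
    exact hlt
  have heq := hganalytic.eqOn_of_preconnected_of_eventuallyEq hcanalytic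
    isPreconnected_univ (Set.mem_univ 0) hev (Set.mem_univ (1 : ℂ))
  have hg1 : g 1 = φ γ := by rw [hg]; exact congrArg φ (hpt u₀ γ)
  exact hγ (hg1 ▸ heq)

/-- If `φ` is a nonconstant entire function on `E' = E →L[ℂ] ℂ`, `γ₀ ∈ E'`, and `(U k)` is a
countable basis of nonempty open sets of `E'`, then for each `k` there is a complex line
through `γ₀` meeting `U k` on which `φ` is nonconstant; in particular the union of these
lines is dense in `E'`. -/
theorem stmt_5 (E : Type*) [NormedAddCommGroup E] [NormedSpace ℂ E] [CompleteSpace E]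
    (φ : (E →L[ℂ] ℂ) → ℂ) (hφ : Differentiable ℂ φ)
    (hnc : ∃ γ₁ γ₂, φ γ₁ ≠ φ γ₂) (γ₀ : E →L[ℂ] ℂ)
    (U : ℕ → Set (E →L[ℂ] ℂ))
    (hbasis : TopologicalSpace.IsTopologicalBasis (Set.range U))
    (hne : ∀ k, (U k).Nonempty) :
    ∃ δ : ℕ → E →L[ℂ] ℂ,
      (∀ k, δ k ≠ 0 ∧ (∃ w : ℂ, γ₀ + w • δ k ∈ U k) ∧
        ¬ (∀ w₁ w₂ : ℂ, φ (γ₀ + w₁ • δ k) = φ (γ₀ + w₂ • δ k))) ∧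
      Dense (⋃ k, {γ : E →L[ℂ] ℂ | ∃ w : ℂ, γ = γ₀ + w • δ k}) := by
  have key : ∀ k, ∃ δ : E →L[ℂ] ℂ, δ ≠ 0 ∧ (∃ w : ℂ, γ₀ + w • δ ∈ U k) ∧
      ¬ (∀ w₁ w₂ : ℂ, φ (γ₀ + w₁ • δ) = φ (γ₀ + w₂ • δ)) := fun k =>
    stmt_5_key E φ hφ hnc γ₀ (U k) (hbasis.isOpen ⟨k, rfl⟩) (hne k)
  choose δ hδ using key
  refine ⟨δ, hδ, ?_⟩
  rw [hbasis.dense_iff]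
  rintro o ⟨k, rfl⟩ -
  obtain ⟨w, hw⟩ := (hδ k).2.1
  exact ⟨γ₀ + w • δ k, hw, Set.mem_iUnion.2 ⟨k, ⟨w, rfl⟩⟩⟩
end

section
/- Let f : ℂ → ℂ be a nonconstant entire function and D ⊆ ∂𝔻 a subset of the unit circle whose complement 𝕋 \ D is dense in 𝕋. Then the set {w ∈ ℂ : f(w) ∈ 𝕋 \ D} has an accumulation point in ℂ. -/
/-!
By Liouville, `f` takes a value `f w₀` on the unit circle. The circle has no isolated points and
`𝕋 \ D` is dense in it, so `f w₀` is an accumulation point of `𝕋 \ D`; since a nonconstant entire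
function is an open map, accumulation pulls back along `f` to `w₀`.
-/

open Filter

/-- Liouville's theorem for `f` and for `1 / f` puts values of `‖f‖` on both sides of `r`. -/
theorem Differentiable.exists_norm_eq_of_ne {f : ℂ → ℂ} (hf : Differentiable ℂ f)
    (hnc : ∃ a b, f a ≠ f b) {r : ℝ} (hr : 0 < r) : ∃ w, ‖f w‖ = r := by
  obtain ⟨a, b, hab⟩ := hnc
  obtain ⟨u, hu⟩ : ∃ u, ‖f u‖ ≤ r := by
    by_contra! hlarge
    have hne : ∀ w, f w ≠ 0 := fun w h0 => by simpa [h0] using (hr.trans (hlarge w))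
    have hbdd : Bornology.IsBounded (Set.range fun w => (f w)⁻¹) := by
      refine isBounded_iff_forall_norm_le.mpr ⟨r⁻¹, Set.forall_mem_range.mpr fun w => ?_⟩
      rw [norm_inv]
      exact inv_anti₀ hr (hlarge w).le
    exact hab (inv_inj.mp ((hf.inv hne).apply_eq_apply_of_bounded hbdd a b))
  obtain ⟨v, hv⟩ : ∃ v, r ≤ ‖f v‖ := by
    by_contra! hsmall
    have hbdd : Bornology.IsBounded (Set.range f) :=
      isBounded_iff_forall_norm_le.mpr ⟨r, Set.forall_mem_range.mpr fun w => (hsmall w).le⟩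
    exact hab (hf.apply_eq_apply_of_bounded hbdd a b)
  exact intermediate_value_univ u v hf.continuous.norm ⟨hu, hv⟩

theorem Differentiable.isOpenMap_of_ne {f : ℂ → ℂ} (hf : Differentiable ℂ f)
    (hnc : ∃ a b, f a ≠ f b) : IsOpenMap f := by
  obtain ⟨a, b, hab⟩ := hnc
  refine (AnalyticOnNhd.is_constant_or_isOpenMap fun z _ => hf.analyticAt z).resolve_left ?_
  rintro ⟨c, hc⟩
  exact hab ((hc a).trans (hc b).symm)

theorem Complex.preperfect_sphere (x : ℂ) {r : ℝ} (hr : 0 < r) :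
    Preperfect (Metric.sphere x r) := by
  refine (isPreconnected_sphere ?_ x r).preperfect_of_nontrivial ?_
  · simp [Complex.rank_real_complex]
  · refine ⟨x + r, by simp [abs_of_pos hr], x - r, by simp [abs_of_pos hr], ?_⟩
    intro h
    have := congrArg Complex.re h
    simp only [Complex.add_re, Complex.sub_re, Complex.ofReal_re] at this
    linarith

theorem Preperfect.accPt_of_subset_closure {X : Type*} [TopologicalSpace X] [T1Space X]
    {S T : Set X} (hS : Preperfect S) (hST : S ⊆ closure T) {x : X} (hx : x ∈ S) :
    AccPt x (𝓟 T) := by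
  rw [← mem_derivedSet, ← derivedSet_closure]
  exact derivedSet_mono _ _ hST (hS x hx)

theorem stmt_11_general (f : ℂ → ℂ) (hf : Differentiable ℂ f) (hnc : ∃ a b, f a ≠ f b)
    (D : Set ℂ)
    (hdense : ∀ z ∈ Metric.sphere (0 : ℂ) 1, z ∈ closure (Metric.sphere (0 : ℂ) 1 \ D)) :
    ∃ w₀ : ℂ, AccPt w₀ (𝓟 {w : ℂ | f w ∈ Metric.sphere (0 : ℂ) 1 \ D}) := by
  obtain ⟨w₀, hw₀⟩ := hf.exists_norm_eq_of_ne hnc one_pos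
  have hacc : AccPt (f w₀) (𝓟 (Metric.sphere (0 : ℂ) 1 \ D)) :=
    (Complex.preperfect_sphere 0 one_pos).accPt_of_subset_closure hdense
      (by simpa using hw₀)
  have hpull := (hf.isOpenMap_of_ne hnc).accPt_comap hacc
  rw [comap_principal] at hpull
  exact ⟨w₀, hpull⟩

/-- If `f` is nonconstant entire and `D` is a subset of the unit circle `𝕋` whose complement
`𝕋 \ D` is dense in `𝕋`, then `{w : f w ∈ 𝕋 \ D}` has an accumulation point in `ℂ`. -/
theorem stmt_11 (f : ℂ → ℂ) (hf : Differentiable ℂ f) (hnc : ∃ a b, f a ≠ f b)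
    (D : Set ℂ) (hD : D ⊆ Metric.sphere (0 : ℂ) 1)
    (hdense : ∀ z ∈ Metric.sphere (0 : ℂ) 1, z ∈ closure (Metric.sphere (0 : ℂ) 1 \ D)) :
    ∃ w₀ : ℂ, AccPt w₀ (𝓟 {w : ℂ | f w ∈ Metric.sphere (0 : ℂ) 1 \ D}) :=
  stmt_11_general f hf hnc D hdense
end

section
/- Let X be a separable F-space and T a continuous linear operator on X. Suppose there exists a dense subset X₀ of X and for each x ∈ X₀ a sequence (u_n(x))_{n≥0} in X with u_0(x) = x such that (1) ∑_{n≥1} T^n x converges unconditionally, (2) ∑_{n≥1} u_n(x) converges unconditionally, and (3) T^j u_n(x) = u_{n-j}(x) for all j ≤ n. Then T is hypercyclic (has a vector with dense orbit). -/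
/-!
By Birkhoff's transitivity theorem it suffices that for nonempty open `U`, `V` some `Tⁿ` maps a
point of `U` into `V`. Pick `y ∈ U ∩ X₀` and `z ∈ V ∩ X₀`: the vectors `y + uₙ(z)` tend to `y`,
while `Tⁿ (y + uₙ(z)) = Tⁿ y + z` tends to `z`, both because the terms of a convergent series
tend to zero.
-/

open Filter Set Topology TopologicalSpace

theorem dense_setOf_denseRange_of_transitive {ι X Y : Type*} [TopologicalSpace X] [BaireSpace X]
    [TopologicalSpace Y] [SecondCountableTopology Y] {f : ι → X → Y}
    (hf : ∀ i, Continuous (f i))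
    (htrans : ∀ (U : Set X) (V : Set Y), IsOpen U → U.Nonempty → IsOpen V → V.Nonempty →
      ∃ i, (U ∩ f i ⁻¹' V).Nonempty) :
    Dense {x | DenseRange fun i => f i x} := by
  obtain ⟨B, hBc, hB_empty, hB⟩ := exists_countable_basis Y
  have hopen : ∀ V ∈ B, IsOpen (⋃ i, f i ⁻¹' V) := fun V hV =>
    isOpen_iUnion fun i => (hB.isOpen hV).preimage (hf i)
  have hdense : ∀ V ∈ B, Dense (⋃ i, f i ⁻¹' V) := by
    intro V hV
    refine dense_iff_inter_open.2 fun U hU hUne => ?_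
    have hVne : V.Nonempty := nonempty_iff_ne_empty.2 (ne_of_mem_of_not_mem hV hB_empty)
    obtain ⟨i, x, hxU, hxV⟩ := htrans U V hU hUne (hB.isOpen hV) hVne
    exact ⟨x, hxU, mem_iUnion.2 ⟨i, hxV⟩⟩
  refine (dense_biInter_of_isOpen hopen hBc hdense).mono fun x hx => ?_
  refine hB.dense_iff.2 fun V hV _ => ?_
  obtain ⟨i, hi⟩ := mem_iUnion.1 (mem_iInter₂.1 hx V hV)
  exact ⟨f i x, hi, mem_range_self i⟩

theorem ContinuousLinearMap.exists_inter_preimage_pow_nonempty {R X : Type*} [Semiring R]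
    [AddCommMonoid X] [Module R X] [TopologicalSpace X] [ContinuousAdd X] (T : X →L[R] X)
    {U V : Set X} (hU : IsOpen U) (hV : IsOpen V) {y z : X} (hyU : y ∈ U) (hzV : z ∈ V)
    (hy : Tendsto (fun n => (T ^ n) y) atTop (𝓝 0)) {v : ℕ → X} (hv : Tendsto v atTop (𝓝 0))
    (hTv : ∀ n, (T ^ n) (v n) = z) :
    ∃ n, (U ∩ ⇑(T ^ n) ⁻¹' V).Nonempty := by
  have h_near_y : Tendsto (fun n => y + v n) atTop (𝓝 y) := by
    simpa using tendsto_const_nhds.add hv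
  have h_near_z : Tendsto (fun n => (T ^ n) (y + v n)) atTop (𝓝 z) := by
    simp only [map_add, hTv]
    simpa using hy.add tendsto_const_nhds
  obtain ⟨n, hnU, hnV⟩ :=
    ((h_near_y.eventually (hU.mem_nhds hyU)).and (h_near_z.eventually (hV.mem_nhds hzV))).exists
  exact ⟨n, y + v n, hnU, hnV⟩

theorem stmt_19_general (X : Type*) [AddCommGroup X] [Module ℂ X] [UniformSpace X]
    [IsUniformAddGroup X] [CompleteSpace X]
    [TopologicalSpace.MetrizableSpace X] [TopologicalSpace.SeparableSpace X]
    (T : X →L[ℂ] X) (X₀ : Set X) (hX₀ : Dense X₀) (u : X → ℕ → X)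
    (hu0 : ∀ x ∈ X₀, u x 0 = x)
    (hT : ∀ x ∈ X₀, Summable fun n : ℕ => (T ^ (n + 1)) x)
    (hu : ∀ x ∈ X₀, Summable fun n : ℕ => u x (n + 1))
    (huT : ∀ x ∈ X₀, ∀ j n : ℕ, j ≤ n → (T ^ j) (u x n) = u x (n - j)) :
    ∃ x : X, Dense (Set.range fun n : ℕ => (T ^ n) x) := by
  have : (uniformity X).IsCountablyGenerated := IsUniformAddGroup.uniformity_countably_generated
  have : SecondCountableTopology X := UniformSpace.secondCountable_of_separable X
  refine (dense_setOf_denseRange_of_transitive (fun n => (T ^ n).continuous)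
    fun U V hU hUne hV hVne => ?_).nonempty
  obtain ⟨y, hyU, hy⟩ := hX₀.inter_open_nonempty U hU hUne
  obtain ⟨z, hzV, hz⟩ := hX₀.inter_open_nonempty V hV hVne
  refine T.exists_inter_preimage_pow_nonempty hU hV hyU hzV
    ((tendsto_add_atTop_iff_nat 1).1 (hT y hy).tendsto_atTop_zero)
    ((tendsto_add_atTop_iff_nat 1).1 (hu z hz).tendsto_atTop_zero) fun n => ?_
  rw [huT z hz n n le_rfl, Nat.sub_self, hu0 z hz]

/-- Modified Frequent Hypercyclicity Criterion (weak conclusion): if `T` is a continuous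
linear operator on a separable F-space `X` and there are a dense set `X₀ ⊆ X` and, for each
`x ∈ X₀`, a sequence `(u_n(x))` with `u_0(x) = x`, such that `∑_{n≥1} Tⁿx` and
`∑_{n≥1} u_n(x)` converge unconditionally and `T^j u_n(x) = u_{n-j}(x)` for `j ≤ n`,
then `T` is hypercyclic. -/
theorem stmt_19 (X : Type*) [AddCommGroup X] [Module ℂ X] [UniformSpace X]
    [IsUniformAddGroup X] [ContinuousSMul ℂ X] [CompleteSpace X]
    [TopologicalSpace.MetrizableSpace X] [TopologicalSpace.SeparableSpace X]
    (T : X →L[ℂ] X) (X₀ : Set X) (hX₀ : Dense X₀) (u : X → ℕ → X)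
    (hu0 : ∀ x ∈ X₀, u x 0 = x)
    (hT : ∀ x ∈ X₀, Summable fun n : ℕ => (T ^ (n + 1)) x)
    (hu : ∀ x ∈ X₀, Summable fun n : ℕ => u x (n + 1))
    (huT : ∀ x ∈ X₀, ∀ j n : ℕ, j ≤ n → (T ^ j) (u x n) = u x (n - j)) :
    ∃ x : X, Dense (Set.range fun n : ℕ => (T ^ n) x) :=
  stmt_19_general X T X₀ hX₀ u hu0 hT hu huT
end
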